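/- Let (W_i)_{i∈ℤ} be a stationary ergodic sequence of integrable real random variables with mean μ. Fix κ > 0 and let R = {(τ_1,τ_2) ∈ [0,1]²: τ_1 < τ_2, τ_2 − τ_1 ≥ κ}. Then sup_{(τ_1,τ_2)∈R} | (1/(n(τ_2−τ_1))) ∑_{i=⌊nτ_1⌋+1}^{⌊nτ_2⌋} W_i − μ | → 0 almost surely. -/

import Mathlib

/-!
Birkhoff's pointwise ergodic theorem, proved through Garsia's maximal ergodic inequality, gives
`S m = m * μ + o(m)` almost surely for the partial sums `S m = ∑ i < m, f (T^[i] ω)`, hence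
`max_{m ≤ n+1} |S m - m * μ| = o(n)`. A window sum is a difference `S (b + 1) - S (a + 1)` with
`b - a` within `1` of `n * (τ₂ - τ₁)`, so it equals `n * (τ₂ - τ₁) * μ + o(n)` uniformly over all
windows; dividing by `n * (τ₂ - τ₁) ≥ n * κ` gives the uniform convergence.
-/

open MeasureTheory Filter Finset Topology

section MaximalErgodic

variable {Ω : Type*} {T : Ω → Ω} {g : Ω → ℝ}

/-- `birkhoffMax T g n x = max_{k ≤ n} birkhoffSum T g k x`, in Garsia's recursive form. -/
noncomputable def birkhoffMax (T : Ω → Ω) (g : Ω → ℝ) : ℕ → Ω → ℝ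
  | 0 => 0
  | n + 1 => fun x => max 0 (g x + birkhoffMax T g n (T x))

lemma birkhoffMax_nonneg (n : ℕ) (x : Ω) : 0 ≤ birkhoffMax T g n x := by
  cases n with
  | zero => rfl
  | succ n => exact le_max_left _ _

lemma birkhoffMax_le_succ (n : ℕ) (x : Ω) : birkhoffMax T g n x ≤ birkhoffMax T g (n + 1) x := by
  induction n generalizing x with
  | zero => exact birkhoffMax_nonneg 1 x
  | succ n ih => exact max_le_max le_rfl (add_le_add_right (ih (T x)) _)

lemma birkhoffSum_le_birkhoffMax {k n : ℕ} (hk : k ≤ n) (x : Ω) :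
    birkhoffSum T g k x ≤ birkhoffMax T g n x := by
  induction n generalizing k x with
  | zero => simp_all [birkhoffSum_zero, birkhoffMax]
  | succ n ih =>
    cases k with
    | zero => simpa [birkhoffSum_zero] using birkhoffMax_nonneg (n + 1) x
    | succ k =>
      rw [birkhoffSum_succ']
      exact (add_le_add_right (ih (by omega) (T x)) _).trans (le_max_right _ _)

lemma birkhoffMax_sub_birkhoffMax_comp_le {n : ℕ} {x : Ω} (hx : 0 < birkhoffMax T g n x) :
    birkhoffMax T g n x - birkhoffMax T g n (T x) ≤ g x := by
  cases n with
  | zero => exact absurd hx (lt_irrefl 0)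
  | succ n =>
    have hmax : birkhoffMax T g (n + 1) x = g x + birkhoffMax T g n (T x) :=
      (max_eq_right_iff.2 ((lt_max_iff.1 hx).resolve_left (lt_irrefl 0)).le)
    linarith [birkhoffMax_le_succ (T := T) (g := g) n (T x)]

variable [MeasurableSpace Ω] {μ : Measure Ω}

lemma measurable_birkhoffMax (hT : Measurable T) (hg : Measurable g) (n : ℕ) :
    Measurable (birkhoffMax T g n) := by
  induction n with
  | zero => exact measurable_const
  | succ n ih => exact measurable_const.max (hg.add (ih.comp hT))

lemma integrable_birkhoffMax (hT : MeasurePreserving T μ μ) (hg : Integrable g μ) (n : ℕ) :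
    Integrable (birkhoffMax T g n) μ := by
  induction n with
  | zero => exact integrable_zero Ω ℝ μ
  | succ n ih =>
    exact (integrable_zero Ω ℝ μ).sup (hg.add (hT.integrable_comp_of_integrable ih))

lemma setIntegral_birkhoffMax_pos_nonneg (hT : MeasurePreserving T μ μ) (hg : Measurable g)
    (hgi : Integrable g μ) (n : ℕ) : 0 ≤ ∫ x in {x | 0 < birkhoffMax T g n x}, g x ∂μ := by
  set Q := birkhoffMax T g n
  have hQ : Integrable Q μ := integrable_birkhoffMax hT hgi n
  have hQT : Integrable (Q ∘ T) μ := hT.integrable_comp_of_integrable hQ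
  have hQm : Measurable Q := measurable_birkhoffMax hT.measurable hg n
  have hinv : ∫ x, Q (T x) ∂μ = ∫ x, Q x ∂μ := by
    rw [← integral_map hT.measurable.aemeasurable (hT.map_eq ▸ hQm.aestronglyMeasurable),
      hT.map_eq]
  have hsupp : ∫ x in {x | 0 < Q x}, Q x ∂μ = ∫ x, Q x ∂μ :=
    setIntegral_eq_integral_of_forall_compl_eq_zero fun x hx =>
      le_antisymm (not_lt.1 hx) (birkhoffMax_nonneg n x)
  calc (0 : ℝ) = ∫ x, Q x ∂μ - ∫ x, Q (T x) ∂μ := by rw [hinv, sub_self]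
    _ ≤ ∫ x in {x | 0 < Q x}, Q x ∂μ - ∫ x in {x | 0 < Q x}, Q (T x) ∂μ := by
        rw [hsupp]
        exact sub_le_sub_left (setIntegral_le_integral hQT
          (Eventually.of_forall fun x => birkhoffMax_nonneg n (T x))) _
    _ = ∫ x in {x | 0 < Q x}, (Q x - Q (T x)) ∂μ :=
        (integral_sub hQ.integrableOn hQT.integrableOn).symm
    _ ≤ ∫ x in {x | 0 < Q x}, g x ∂μ :=
        setIntegral_mono_on (hQ.sub hQT).integrableOn hgi.integrableOn
          (measurableSet_lt measurable_const hQm) fun _ hx => birkhoffMax_sub_birkhoffMax_comp_le hx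

theorem setIntegral_iUnion_birkhoffMax_pos_nonneg (hT : MeasurePreserving T μ μ)
    (hg : Measurable g) (hgi : Integrable g μ) :
    0 ≤ ∫ x in ⋃ n, {x | 0 < birkhoffMax T g n x}, g x ∂μ := by
  have hmono : Monotone fun n => {x | 0 < birkhoffMax T g n x} :=
    monotone_nat_of_le_succ fun n x hx => hx.trans_le (birkhoffMax_le_succ n x)
  exact ge_of_tendsto' (tendsto_setIntegral_of_monotone
      (fun n => measurableSet_lt measurable_const (measurable_birkhoffMax hT.measurable hg n))
      hmono hgi.integrableOn)
    (setIntegral_birkhoffMax_pos_nonneg hT hg hgi)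

end MaximalErgodic

section PointwiseErgodic

variable {Ω : Type*} {T : Ω → Ω} {g : Ω → ℝ}

lemma bddAbove_birkhoffSum_apply_iff (x : Ω) :
    BddAbove (Set.range fun n => birkhoffSum T g n (T x)) ↔
      BddAbove (Set.range fun n => birkhoffSum T g n x) := by
  simp only [bddAbove_def, Set.forall_mem_range]
  constructor
  · rintro ⟨M, hM⟩
    refine ⟨max 0 (g x + M), fun n => ?_⟩
    cases n with
    | zero => simp [birkhoffSum_zero]
    | succ n =>
      rw [birkhoffSum_succ']
      exact le_max_of_le_right (by linarith [hM n])
  · rintro ⟨M, hM⟩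
    refine ⟨M - g x, fun n => ?_⟩
    linarith [hM (n + 1), birkhoffSum_succ' T g n x]

variable [MeasurableSpace Ω] {μ : Measure Ω}

lemma measurable_birkhoffSum (hT : Measurable T) (hg : Measurable g) (n : ℕ) :
    Measurable (birkhoffSum T g n) :=
  Finset.measurable_sum _ fun k _ => hg.comp (hT.iterate k)

theorem ae_bddAbove_birkhoffSum_of_integral_neg (hT : Ergodic T μ) (hg : Measurable g)
    (hgi : Integrable g μ) (hneg : ∫ x, g x ∂μ < 0) :
    ∀ᵐ x ∂μ, BddAbove (Set.range fun n => birkhoffSum T g n x) := by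
  have hA : MeasurableSet {x | BddAbove (Set.range fun n => birkhoffSum T g n x)} :=
    measurableSet_bddAbove_range (measurable_birkhoffSum hT.measurable hg)
  refine (hT.ae_mem_or_ae_notMem hA (Set.ext bddAbove_birkhoffSum_apply_iff)).resolve_right
    fun hunbdd => hneg.not_ge ?_
  -- unbounded sums put a.e. point in the set of the maximal inequality, which forces `0 ≤ ∫ g`
  have hmax : ∀ᵐ x ∂μ, x ∈ ⋃ n, {x | 0 < birkhoffMax T g n x} := by
    filter_upwards [hunbdd] with x hx
    obtain ⟨_, ⟨n, rfl⟩, hn⟩ := not_bddAbove_iff.1 hx 0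
    exact Set.mem_iUnion.2 ⟨n, hn.trans_le (birkhoffSum_le_birkhoffMax le_rfl x)⟩
  simpa [Measure.restrict_eq_self_of_ae_mem hmax] using
    setIntegral_iUnion_birkhoffMax_pos_nonneg hT.toMeasurePreserving hg hgi

variable [IsProbabilityMeasure μ]

theorem ae_eventually_birkhoffAverage_lt (hT : Ergodic T μ) (hg : Measurable g)
    (hgi : Integrable g μ) {c : ℝ} (hc : ∫ x, g x ∂μ < c) :
    ∀ᵐ x ∂μ, ∀ᶠ n in atTop, birkhoffAverage ℝ T g n x < c := by
  obtain ⟨c', hgc', hc'c⟩ := exists_between hc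
  have hneg : ∫ x, (g x - c') ∂μ < 0 := by
    rw [integral_sub hgi (integrable_const c')]
    simp only [integral_const, probReal_univ, one_smul]
    linarith
  filter_upwards [ae_bddAbove_birkhoffSum_of_integral_neg hT (hg.sub_const c')
    (hgi.sub (integrable_const c')) hneg] with x ⟨M, hM⟩
  have hsmall : ∀ᶠ n : ℕ in atTop, M / n < c - c' :=
    (tendsto_const_div_atTop_nhds_zero_nat M).eventually (gt_mem_nhds (by linarith))
  filter_upwards [hsmall, eventually_gt_atTop 0] with n hn hn0
  have hS : birkhoffSum T g n x - n * c' ≤ M := by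
    simpa [birkhoffSum, Finset.sum_sub_distrib] using hM (Set.mem_range_self n)
  have hn0' : (0 : ℝ) < n := Nat.cast_pos.2 hn0
  calc birkhoffAverage ℝ T g n x = birkhoffSum T g n x / n := by
        rw [birkhoffAverage, smul_eq_mul, inv_mul_eq_div]
    _ ≤ c' + M / n := by
        rw [div_le_iff₀ hn0', add_mul, div_mul_cancel₀ _ hn0'.ne']
        linarith
    _ < c := by linarith

theorem ae_forall_eventually_birkhoffAverage_lt (hT : Ergodic T μ) (hg : Measurable g)
    (hgi : Integrable g μ) :
    ∀ᵐ x ∂μ, ∀ c, ∫ x, g x ∂μ < c → ∀ᶠ n in atTop, birkhoffAverage ℝ T g n x < c := by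
  have hrat : ∀ᵐ x ∂μ, ∀ q : ℚ, ∫ x, g x ∂μ < q →
      ∀ᶠ n in atTop, birkhoffAverage ℝ T g n x < q := by
    refine ae_all_iff.2 fun q => ?_
    by_cases hq : ∫ x, g x ∂μ < q
    · filter_upwards [ae_eventually_birkhoffAverage_lt hT hg hgi hq] with x hx _ using hx
    · exact Eventually.of_forall fun x h => absurd h hq
  filter_upwards [hrat] with x hx c hc
  obtain ⟨q, hgq, hqc⟩ := exists_rat_btwn hc
  exact (hx q hgq).mono fun n hn => hn.trans hqc

theorem ae_tendsto_birkhoffAverage_of_measurable (hT : Ergodic T μ) (hg : Measurable g)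
    (hgi : Integrable g μ) :
    ∀ᵐ x ∂μ, Tendsto (birkhoffAverage ℝ T g · x) atTop (𝓝 (∫ x, g x ∂μ)) := by
  filter_upwards [ae_forall_eventually_birkhoffAverage_lt hT hg hgi,
    ae_forall_eventually_birkhoffAverage_lt hT hg.neg hgi.neg] with x hup hlow
  refine tendsto_order.2 ⟨fun a ha => ?_, hup⟩
  filter_upwards [hlow (-a) (by simp only [Pi.neg_apply, integral_neg]; linarith)] with n hn
  rw [birkhoffAverage_neg, Pi.neg_apply, Pi.neg_apply] at hn
  linarith

theorem ae_tendsto_birkhoffAverage (hT : Ergodic T μ) (hg : Integrable g μ) :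
    ∀ᵐ x ∂μ, Tendsto (birkhoffAverage ℝ T g · x) atTop (𝓝 (∫ x, g x ∂μ)) := by
  have hmk := hg.aemeasurable.ae_eq_mk
  have hae : ∀ᵐ x ∂μ, ∀ n,
      birkhoffAverage ℝ T g n x = birkhoffAverage ℝ T (hg.aemeasurable.mk g) n x :=
    ae_all_iff.2 fun n =>
      hT.toMeasurePreserving.quasiMeasurePreserving.birkhoffAverage_ae_eq_of_ae_eq ℝ hmk n
  filter_upwards [ae_tendsto_birkhoffAverage_of_measurable hT hg.aemeasurable.measurable_mk
    (hg.congr hmk), hae] with x hx hxe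
  rw [integral_congr_ae hmk]
  simpa only [hxe] using hx

end PointwiseErgodic

section WindowAverages

lemma eventually_forall_le_abs_sub_le_mul {S : ℕ → ℝ} {I : ℝ}
    (hS : Tendsto (fun m => S m / m) atTop (𝓝 I)) {δ : ℝ} (hδ : 0 < δ) :
    ∀ᶠ n : ℕ in atTop, ∀ m ≤ n, |S m - m * I| ≤ δ * n := by
  obtain ⟨N, hN⟩ := Metric.tendsto_atTop.1 hS δ hδ
  set C := ∑ m ∈ range (N + 1), |S m - m * I|
  filter_upwards [tendsto_natCast_atTop_atTop.eventually_ge_atTop (C / δ)] with n hn m hmn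
  rcases le_or_gt m N with hmN | hNm
  · calc |S m - m * I| ≤ C :=
          single_le_sum (f := fun m => |S m - m * I|) (fun _ _ => abs_nonneg _)
            (mem_range.2 (Nat.lt_succ_of_le hmN))
      _ ≤ δ * n := (div_le_iff₀' hδ).1 hn
  · have hm : (0 : ℝ) < m := Nat.cast_pos.2 (by omega)
    calc |S m - m * I| = |m * (S m / m - I)| := by rw [mul_sub, mul_div_cancel₀ _ hm.ne']
      _ = m * |S m / m - I| := by rw [abs_mul, abs_of_pos hm]
      _ ≤ m * δ := by
          gcongr
          exact (hN m hNm.le).le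
      _ ≤ δ * n := by
          rw [mul_comm]
          gcongr

lemma sum_Ioc_eq_sum_range_sub_sum_range {M : Type*} [AddCommGroup M] (u : ℕ → M) {a b : ℕ}
    (hab : a ≤ b) :
    ∑ i ∈ Ioc a b, u i = ∑ i ∈ range (b + 1), u i - ∑ i ∈ range (a + 1), u i := by
  rw [← Ico_add_one_add_one_eq_Ioc, sum_Ico_eq_sub _ (by omega)]

lemma abs_natFloor_sub_natFloor_sub_lt_one {s t : ℝ} (hs : 0 ≤ s) (ht : 0 ≤ t) :
    |((⌊t⌋₊ : ℝ) - ⌊s⌋₊) - (t - s)| < 1 := by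
  rw [abs_sub_lt_iff]
  constructor <;> linarith [Nat.floor_le hs, Nat.floor_le ht, Nat.lt_floor_add_one s,
    Nat.lt_floor_add_one t]

lemma abs_sum_Ioc_natFloor_sub_le {u : ℕ → ℝ} {I η : ℝ} {n : ℕ}
    (hu : ∀ m ≤ n + 1, |∑ i ∈ range m, u i - m * I| ≤ η) {τ₁ τ₂ : ℝ} (hτ₁ : 0 ≤ τ₁)
    (hτ₁₂ : τ₁ ≤ τ₂) (hτ₂ : τ₂ ≤ 1) :
    |∑ i ∈ Ioc ⌊n * τ₁⌋₊ ⌊n * τ₂⌋₊, u i - n * (τ₂ - τ₁) * I| ≤ 2 * η + |I| := by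
  set a := ⌊(n : ℝ) * τ₁⌋₊
  set b := ⌊(n : ℝ) * τ₂⌋₊
  have hab : a ≤ b := Nat.floor_le_floor (by gcongr)
  have hbn : b ≤ n := Nat.floor_le_of_le (mul_le_of_le_one_right n.cast_nonneg hτ₂)
  have hfloor := abs_natFloor_sub_natFloor_sub_lt_one (mul_nonneg n.cast_nonneg hτ₁)
    (mul_nonneg n.cast_nonneg (hτ₁.trans hτ₁₂))
  rw [sum_Ioc_eq_sum_range_sub_sum_range u hab]
  calc |∑ i ∈ range (b + 1), u i - ∑ i ∈ range (a + 1), u i - n * (τ₂ - τ₁) * I|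
      = |(∑ i ∈ range (b + 1), u i - (b + 1 : ℕ) * I)
          - (∑ i ∈ range (a + 1), u i - (a + 1 : ℕ) * I)
          + ((b - a) - (n * τ₂ - n * τ₁)) * I| := by push_cast; ring_nf
    _ ≤ |∑ i ∈ range (b + 1), u i - (b + 1 : ℕ) * I|
          + |∑ i ∈ range (a + 1), u i - (a + 1 : ℕ) * I|
          + |((b : ℝ) - a) - (n * τ₂ - n * τ₁)| * |I| := by
        rw [← abs_mul]
        exact (abs_add_le _ _).trans (add_le_add_left (abs_sub _ _) _)
    _ ≤ η + η + 1 * |I| :=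
        add_le_add_three (hu _ (by omega)) (hu _ (by omega))
          (mul_le_mul_of_nonneg_right hfloor.le (abs_nonneg I))
    _ = 2 * η + |I| := by ring

theorem eventually_abs_window_average_sub_le {u : ℕ → ℝ} {I : ℝ}
    (hu : Tendsto (fun m => (∑ i ∈ range m, u i) / m) atTop (𝓝 I)) {κ ε : ℝ} (hκ : 0 < κ)
    (hε : 0 < ε) :
    ∀ᶠ n : ℕ in atTop, ∀ τ₁ τ₂ : ℝ, 0 ≤ τ₁ → τ₂ ≤ 1 → κ ≤ τ₂ - τ₁ →
      |(1 / (n * (τ₂ - τ₁))) * ∑ i ∈ Ioc ⌊n * τ₁⌋₊ ⌊n * τ₂⌋₊, u i - I| ≤ ε := by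
  -- budget: two partial-sum errors `≤ ε κ n / 4` and the floor error `|I| ≤ ε κ n / 2`
  have hpartial : ∀ᶠ n : ℕ in atTop, ∀ m ≤ n + 1,
      |∑ i ∈ range m, u i - m * I| ≤ ε * κ / 8 * (n + 1 : ℕ) :=
    (tendsto_add_atTop_nat 1).eventually (eventually_forall_le_abs_sub_le_mul hu (by positivity))
  have hI : ∀ᶠ n : ℕ in atTop, |I| ≤ ε * κ / 2 * n := by
    filter_upwards [tendsto_natCast_atTop_atTop.eventually_ge_atTop (|I| / (ε * κ / 2))]
      with n hn
    rwa [div_le_iff₀' (by positivity)] at hn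
  filter_upwards [hpartial, hI, eventually_ge_atTop 1] with n hn hIn hn1 τ₁ τ₂ hτ₁ hτ₂ hκτ
  have hn1' : (1 : ℝ) ≤ n := Nat.one_le_cast.2 hn1
  have hτ : 0 < τ₂ - τ₁ := hκ.trans_le hκτ
  have hD : 0 < (n : ℝ) * (τ₂ - τ₁) := by positivity
  have hwin := abs_sum_Ioc_natFloor_sub_le hn hτ₁ (by linarith) hτ₂
  push_cast at hwin
  have hn2 : ε * κ * (n + 1) ≤ ε * κ * (2 * n) := by gcongr; linarith
  have hκD : ε * n * κ ≤ ε * n * (τ₂ - τ₁) := by gcongr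
  calc |(1 / (n * (τ₂ - τ₁))) * ∑ i ∈ Ioc ⌊n * τ₁⌋₊ ⌊n * τ₂⌋₊, u i - I|
      = |∑ i ∈ Ioc ⌊n * τ₁⌋₊ ⌊n * τ₂⌋₊, u i - n * (τ₂ - τ₁) * I| / (n * (τ₂ - τ₁)) := by
        rw [← abs_of_pos hD, ← abs_div, abs_of_pos hD]
        congr 1
        field_simp
    _ ≤ (ε * κ * n) / (n * (τ₂ - τ₁)) := by
        gcongr
        linarith
    _ ≤ ε := by
        rw [div_le_iff₀ hD]
        linarith

end WindowAverages

/-- Uniform ergodic theorem over sub-windows of relative length at least κ: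
the windowed averages converge to the mean uniformly over all such windows, a.s. -/
theorem stmt13 {Ω : Type*} [MeasurableSpace Ω] (μ : Measure Ω) [IsProbabilityMeasure μ]
    (T : Ω → Ω) (hT : Ergodic T μ) (f : Ω → ℝ) (hf : Integrable f μ)
    (κ : ℝ) (hκ : 0 < κ) :
    ∀ᵐ ω ∂μ, ∀ ε : ℝ, 0 < ε →
      ∀ᶠ n : ℕ in atTop, ∀ τ1 τ2 : ℝ, 0 ≤ τ1 → τ2 ≤ 1 → κ ≤ τ2 - τ1 →
        |(1 / ((n : ℝ) * (τ2 - τ1))) *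
            (∑ i ∈ Finset.Ioc ⌊(n : ℝ) * τ1⌋₊ ⌊(n : ℝ) * τ2⌋₊, f (T^[i] ω)) -
          ∫ x, f x ∂μ| ≤ ε := by
  filter_upwards [ae_tendsto_birkhoffAverage hT hf] with ω hω ε hε
  refine eventually_abs_window_average_sub_le (u := fun i => f (T^[i] ω)) ?_ hκ hε
  simpa only [birkhoffAverage, birkhoffSum, smul_eq_mul, inv_mul_eq_div] using hω
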